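/- arXiv:2108.01421 — 2 statements merged into one kernel-verified Lean document; each statement's English description precedes it below -/
import Mathlib

section
/- For N ≥ 3 with 2* = 2N/(N-2), the limit as q → 2*⁻ of (1/(2*-q)) · ((2*-q)/(2*-2))^((2*-2)/(q-2)) equals (N-2)/4. -/
open Real Filter Topology

theorem limit_at_critical (N : ℕ) (hN : 3 ≤ N) (p : ℝ)
    (hp : p = 2 * (N : ℝ) / ((N : ℝ) - 2)) :
    Tendsto (fun q : ℝ => (1 / (p - q)) * ((p - q) / (p - 2)) ^ ((p - 2) / (q - 2)))
      (𝓝[<] p) (𝓝 (((N : ℝ) - 2) / 4)) := by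
  have hN2 : (2:ℝ) < (N:ℝ) := by
    have : (3:ℝ) ≤ (N:ℝ) := by exact_mod_cast hN
    linarith
  have hden : (0:ℝ) < (N:ℝ) - 2 := by linarith
  have hp2 : p - 2 = 4 / ((N:ℝ) - 2) := by
    rw [hp]; field_simp; ring
  have hc : 0 < p - 2 := by rw [hp2]; positivity
  have h2p : (2:ℝ) < p := by linarith
  have hval : ((N:ℝ) - 2)/4 = 1/(p-2) := by
    rw [hp2]; field_simp
  rw [hval]
  -- auxiliary limits
  have hA : Tendsto (fun q : ℝ => (p - q) * Real.log (p - q)) (𝓝[<] p) (𝓝 0) := by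
    have h1 : Continuous (fun q : ℝ => (p - q) * Real.log (p - q)) :=
      Real.continuous_mul_log.comp (continuous_const.sub continuous_id)
    have := (h1.tendsto p).mono_left (nhdsWithin_le_nhds (s := Set.Iio p))
    simpa using this
  have hB : Tendsto (fun q : ℝ => 1 / (q - 2)) (𝓝[<] p) (𝓝 (1 / (p - 2))) := by
    refine Tendsto.div tendsto_const_nhds ?_ (by linarith)
    exact ((continuous_id.sub continuous_const).tendsto p).mono_left (nhdsWithin_le_nhds (s := Set.Iio p))
  have hC : Tendsto (fun q : ℝ => p - q) (𝓝[<] p) (𝓝 0) := by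
    have h1 : Continuous (fun q : ℝ => p - q) := continuous_const.sub continuous_id
    have := (h1.tendsto p).mono_left (nhdsWithin_le_nhds (s := Set.Iio p))
    simpa using this
  have hexp : Tendsto (fun q : ℝ =>
      (1 / (q - 2)) * ((p - q) * Real.log (p - q)) - ((p - q) * (1 / (q - 2))) * Real.log (p - 2))
      (𝓝[<] p) (𝓝 0) := by
    have h1 : Tendsto (fun q : ℝ => (1 / (q - 2)) * ((p - q) * Real.log (p - q)))
        (𝓝[<] p) (𝓝 ((1/(p-2)) * 0)) := hB.mul hA
    have h2 : Tendsto (fun q : ℝ => ((p - q) * (1 / (q - 2))) * Real.log (p - 2))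
        (𝓝[<] p) (𝓝 ((0 * (1/(p-2))) * Real.log (p - 2))) :=
      ((hC.mul hB).mul tendsto_const_nhds)
    have := h1.sub h2
    simpa using this
  have hmem : Set.Ioo (2:ℝ) p ∈ 𝓝[<] p := Ioo_mem_nhdsLT_of_mem ⟨h2p, le_rfl⟩
  have hg : Tendsto (fun q : ℝ =>
      (1/(p-2)) * Real.exp ((1 / (q - 2)) * ((p - q) * Real.log (p - q))
        - ((p - q) * (1 / (q - 2))) * Real.log (p - 2)))
      (𝓝[<] p) (𝓝 (1/(p-2))) := by
    have := (Real.continuous_exp.tendsto 0).comp hexp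
    have h := this.const_mul (1/(p-2))
    simpa using h
  refine Tendsto.congr' ?_ hg
  filter_upwards [hmem] with q hq
  obtain ⟨hq2, hqp⟩ := hq
  have ht : 0 < p - q := by linarith
  have hd : 0 < q - 2 := by linarith
  have hx : 0 < (p - q)/(p - 2) := div_pos ht hc
  rw [Real.rpow_def_of_pos hx, Real.log_div ht.ne' hc.ne']
  have key : (Real.log (p-q) - Real.log (p-2)) * ((p-2)/(q-2))
      = ((1/(q-2))*((p-q)*Real.log (p-q)) - ((p-q)*(1/(q-2)))*Real.log (p-2))
        + (Real.log (p-q) - Real.log (p-2)) := by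
    field_simp
    ring
  rw [key]
  simp only [Real.exp_add, Real.exp_sub, Real.exp_log ht, Real.exp_log hc]
  field_simp
end

section
/- Let N ≥ 3 and suppose w : ℝᴺ → ℝ is a positive C² function satisfying -Δw + εw ≥ 0 on {|x| ≥ 1} for some ε > 0, and w is continuous. Then there exists c > 0 such that w(x) ≥ c |x|^{-(N-2)} exp(-√ε |x|) for all |x| ≥ 1. -/
/-!
The radial profile `Φ(x) = ‖x‖ ^ (-(N - 2)) * exp (-√ε ‖x‖)` satisfies
`ΔΦ = (ε + (N - 3) √ε / ‖x‖) Φ ≥ ε Φ` away from the origin: it is a subsolution of `-Δ + ε`,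
while `w` is a supersolution. Scale `Φ` by `c > 0` so that `c Φ ≤ w` on the unit sphere. On the
annulus `1 ≤ ‖x‖ ≤ R` the difference `u = w - c Φ` satisfies `Δu ≤ ε u`, so at an interior minimum
`0 ≤ Δu ≤ ε u`; on the outer sphere `u ≥ -c Φ(R)` because `w > 0`. Hence `u ≥ -c Φ(R)` on the
whole annulus, and `Φ(R) → 0` as `R → ∞` gives `w ≥ c Φ`.
-/

open Real Filter Topology Laplacian InnerProductSpace Module

theorem IsLocalMin.deriv_deriv_nonneg {u : ℝ → ℝ} {a : ℝ} (h : IsLocalMin u a)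
    (hc : ContinuousAt u a) : 0 ≤ deriv (deriv u) a := by
  by_contra! hneg
  -- `a` is then also a local maximum, so `u` is locally constant near `a`
  have hmax : IsLocalMax u a := isLocalMax_of_deriv_deriv_neg hneg h.deriv_eq_zero hc
  have hconst : u =ᶠ[𝓝 a] fun _ => u a := by
    filter_upwards [h, hmax] with t h₁ h₂ using le_antisymm h₂ h₁
  have hderiv : deriv u =ᶠ[𝓝 a] fun _ => 0 := by
    filter_upwards [hconst.eventuallyEq_nhds] with t ht
    rw [ht.deriv_eq, deriv_const]
  rw [hderiv.deriv_eq, deriv_const] at hneg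
  exact lt_irrefl _ hneg

section NormedSpace

variable {E : Type*} [NormedAddCommGroup E] [NormedSpace ℝ E]

theorem IsLocalMin.fderiv_fderiv_apply_self_nonneg {u : E → ℝ} {x : E} (h : IsLocalMin u x)
    (hu : ContDiffAt ℝ 2 u x) (v : E) : 0 ≤ fderiv ℝ (fderiv ℝ u) x v v := by
  set line : ℝ → E := fun t => x + t • v
  have hline : ∀ t, HasDerivAt line v t := fun t => by
    simpa only [one_smul] using ((hasDerivAt_id' t).smul_const v).const_add x
  have hline0 : line 0 = x := by simp [line]
  have hcont : ContinuousAt line 0 := (hline 0).continuousAt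
  have hderiv : deriv (u ∘ line) =ᶠ[𝓝 0] fun t => fderiv ℝ u (line t) v := by
    have hdiff : ∀ᶠ y in 𝓝 x, DifferentiableAt ℝ u y :=
      (hu.eventually (by simp)).mono fun y hy => hy.differentiableAt (by simp)
    rw [← hline0] at hdiff
    filter_upwards [hcont.eventually hdiff] with t ht
    exact (ht.hasFDerivAt.comp_hasDerivAt t (hline t)).deriv
  have hderiv2 : HasDerivAt (fun t => fderiv ℝ u (line t) v) (fderiv ℝ (fderiv ℝ u) x v v) 0 := by
    have hd : DifferentiableAt ℝ (fderiv ℝ u) (line 0) := by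
      rw [hline0]; exact (hu.fderiv_right (m := 1) (by norm_num)).differentiableAt (by simp)
    have := (hd.hasFDerivAt.comp_hasDerivAt 0 (hline 0)).clm_apply (hasDerivAt_const 0 v)
    simpa [hline0] using this
  have := (hline0 ▸ h).comp_continuous hcont |>.deriv_deriv_nonneg
    ((hline0 ▸ hu.continuousAt).comp hcont)
  rwa [hderiv.deriv_eq, hderiv2.deriv] at this

end NormedSpace

section InnerProductSpace

variable {E : Type*} [NormedAddCommGroup E] [InnerProductSpace ℝ E]

theorem hasFDerivAt_norm {x : E} (hx : x ≠ 0) :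
    HasFDerivAt (fun y : E => ‖y‖) (‖x‖⁻¹ • innerSL ℝ x) x := by
  have hsq := (hasStrictFDerivAt_norm_sq x).hasFDerivAt.sqrt (by positivity)
  simp only [sqrt_sq (norm_nonneg _)] at hsq
  convert hsq using 1
  ext v
  simp only [smul_apply, coe_innerSL_apply, smul_eq_mul, one_div, mul_inv_rev,
    nsmul_eq_mul, Nat.cast_ofNat]
  field_simp

theorem hasFDerivAt_comp_norm {f : ℝ → ℝ} {f' : ℝ} {x : E} (hx : x ≠ 0)
    (hf : HasDerivAt f f' ‖x‖) :
    HasFDerivAt (fun y : E => f ‖y‖) ((f' / ‖x‖) • innerSL ℝ x) x := by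
  refine (hf.comp_hasFDerivAt x (hasFDerivAt_norm hx)).congr_fderiv ?_
  rw [smul_smul, div_eq_mul_inv]

variable [FiniteDimensional ℝ E]

theorem laplacian_eq_sum_fderiv_fderiv {ι : Type*} [Fintype ι] (b : OrthonormalBasis ι ℝ E)
    {u : E → ℝ} {x : E} (hu : ContDiffAt ℝ 2 u x) :
    Δ u x = ∑ i, fderiv ℝ (fun y => fderiv ℝ u y (b i)) x (b i) := by
  have hd : DifferentiableAt ℝ (fderiv ℝ u) x :=
    (hu.fderiv_right (m := 1) (by norm_num)).differentiableAt (by simp)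
  simp [laplacian_eq_iteratedFDeriv_orthonormalBasis u b, iteratedFDeriv_two_apply,
    fderiv_clm_apply hd (differentiableAt_const _)]

theorem IsLocalMin.laplacian_nonneg {u : E → ℝ} {x : E} (h : IsLocalMin u x)
    (hu : ContDiffAt ℝ 2 u x) : 0 ≤ Δ u x := by
  rw [laplacian_eq_iteratedFDeriv_stdOrthonormalBasis]
  exact Finset.sum_nonneg fun i _ => by
    simpa [iteratedFDeriv_two_apply] using h.fderiv_fderiv_apply_self_nonneg hu _

theorem laplacian_comp_norm {f f' : ℝ → ℝ} {f'' : ℝ} {x : E} (hx : x ≠ 0)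
    (hf : ∀ᶠ r in 𝓝 ‖x‖, HasDerivAt f (f' r) r) (hf' : HasDerivAt f' f'' ‖x‖) :
    Δ (fun y : E => f ‖y‖) x = f'' + (finrank ℝ E - 1) / ‖x‖ * f' ‖x‖ := by
  have hr : ‖x‖ ≠ 0 := norm_ne_zero_iff.mpr hx
  have hD : fderiv ℝ (fun y : E => f ‖y‖) =ᶠ[𝓝 x] fun y => (f' ‖y‖ / ‖y‖) • innerSL ℝ y := by
    filter_upwards [eventually_ne_nhds hx, continuous_norm.continuousAt.eventually hf]
      with y hy hfy using (hasFDerivAt_comp_norm hy hfy).fderiv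
  have hD2 : HasFDerivAt (fun y : E => (f' ‖y‖ / ‖y‖) • innerSL ℝ y) _ x :=
    (hasFDerivAt_comp_norm hx (hf'.div (hasDerivAt_id' _) hr)).smul
      (innerSL ℝ : E →L[ℝ] E →L[ℝ] ℝ).hasFDerivAt
  have hterm : ∀ v : E, fderiv ℝ (fderiv ℝ (fun y : E => f ‖y‖)) x v v
      = f' ‖x‖ / ‖x‖ * ‖v‖ ^ 2 + (f'' * ‖x‖ - f' ‖x‖) / ‖x‖ ^ 3 * ⟪x, v⟫_ℝ ^ 2 := by
    intro v
    have hvv : (innerSL ℝ : E →L[ℝ] E →L[ℝ] ℝ) v v = ‖v‖ ^ 2 := real_inner_self_eq_norm_sq v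
    simp only [hD.fderiv_eq, hD2.fderiv, Pi.div_apply, mul_one, add_apply,
      smul_apply, ContinuousLinearMap.smulRight_apply, coe_innerSL_apply,
      smul_eq_mul, hvv]
    field_simp
  set b := stdOrthonormalBasis ℝ E
  have hsum : ∑ i, ⟪x, b i⟫_ℝ ^ 2 = ‖x‖ ^ 2 := by
    simpa [sq, real_inner_comm, real_inner_self_eq_norm_sq] using b.sum_inner_mul_inner x x
  rw [laplacian_eq_iteratedFDeriv_orthonormalBasis _ b]
  simp only [iteratedFDeriv_two_apply, Matrix.cons_val_zero, Matrix.cons_val_one, hterm,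
    b.orthonormal.1, one_pow, mul_one, Finset.sum_add_distrib, Finset.sum_const, Finset.card_univ,
    Fintype.card_fin, nsmul_eq_mul, ← Finset.mul_sum, hsum]
  field_simp
  ring

end InnerProductSpace

noncomputable def expBarrier (m k r : ℝ) : ℝ := r ^ (-m) * exp (-(k * r))

section expBarrier
variable {m k r : ℝ}

theorem expBarrier_pos (hr : 0 < r) : 0 < expBarrier m k r := by
  unfold expBarrier; positivity

theorem contDiffAt_expBarrier {n : WithTop ℕ∞} (hr : r ≠ 0) : ContDiffAt ℝ n (expBarrier m k) r :=
  (Real.contDiffAt_rpow_const_of_ne hr).mul (contDiff_const.mul contDiff_id).neg.exp.contDiffAt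

theorem hasDerivAt_expBarrier (hr : 0 < r) :
    HasDerivAt (expBarrier m k) (-(m / r + k) * expBarrier m k r) r := by
  have hpow := Real.hasDerivAt_rpow_const (p := -m) (Or.inl hr.ne')
  have hexp : HasDerivAt (fun s => exp (-(k * s))) (exp (-(k * r)) * -k) r := by
    simpa using ((hasDerivAt_id' r).const_mul k).neg.exp
  refine (hpow.mul hexp).congr_deriv ?_
  rw [expBarrier, Real.rpow_sub hr, Real.rpow_one]
  field_simp
  ring

theorem hasDerivAt_deriv_expBarrier (hr : 0 < r) :
    HasDerivAt (fun s => -(m / s + k) * expBarrier m k s)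
      (((m / r + k) ^ 2 + m / r ^ 2) * expBarrier m k r) r := by
  have hcoef : HasDerivAt (fun s => -(m / s + k)) (m / r ^ 2) r :=
    (((hasDerivAt_const r m).div (hasDerivAt_id' r) hr.ne').add_const k).neg.congr_deriv
      (by ring)
  refine (hcoef.mul (hasDerivAt_expBarrier hr)).congr_deriv ?_
  ring

theorem tendsto_expBarrier_atTop (hm : 0 < m) (hk : 0 ≤ k) :
    Tendsto (expBarrier m k) atTop (𝓝 0) := by
  refine squeeze_zero' ?_ ?_ (tendsto_rpow_neg_atTop hm)
  · filter_upwards [eventually_gt_atTop 0] with r hr using (expBarrier_pos hr).le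
  · filter_upwards [eventually_gt_atTop 0] with r hr
    exact mul_le_of_le_one_right (by positivity) (exp_le_one_iff.mpr (by nlinarith))

end expBarrier

section Comparison

variable {E : Type*} [NormedAddCommGroup E] [InnerProductSpace ℝ E] [FiniteDimensional ℝ E]

theorem laplacian_expBarrier_norm {k : ℝ} {x : E} (hx : x ≠ 0) :
    Δ (fun y : E => expBarrier (finrank ℝ E - 2) k ‖y‖) x
      = (k ^ 2 + (finrank ℝ E - 3) * k / ‖x‖) * expBarrier (finrank ℝ E - 2) k ‖x‖ := by
  have hr : 0 < ‖x‖ := norm_pos_iff.mpr hx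
  rw [laplacian_comp_norm hx ((eventually_gt_nhds hr).mono fun r hr => hasDerivAt_expBarrier hr)
    (hasDerivAt_deriv_expBarrier hr)]
  field_simp
  ring

theorem mul_le_laplacian_expBarrier_norm {ε : ℝ} {x : E} (hn : 3 ≤ finrank ℝ E) (hε : 0 ≤ ε)
    (hx : x ≠ 0) :
    ε * expBarrier (finrank ℝ E - 2) √ε ‖x‖
      ≤ Δ (fun y : E => expBarrier (finrank ℝ E - 2) √ε ‖y‖) x := by
  have hn' : (3 : ℝ) ≤ finrank ℝ E := by exact_mod_cast hn
  have hφ : 0 < expBarrier (finrank ℝ E - 2) √ε ‖x‖ := expBarrier_pos (norm_pos_iff.mpr hx)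
  have hcross : 0 ≤ (finrank ℝ E - 3 : ℝ) * √ε / ‖x‖ := by
    have := sub_nonneg.mpr hn'; positivity
  rw [laplacian_expBarrier_norm hx, sq_sqrt hε]
  nlinarith

theorem IsCompact.le_of_laplacian_le_mul_self {K : Set E} {u : E → ℝ} {ε a : ℝ}
    (hK : IsCompact K) (hu : ContinuousOn u K) (hu₂ : ∀ x ∈ interior K, ContDiffAt ℝ 2 u x)
    (hε : 0 < ε) (hΔ : ∀ x ∈ interior K, Δ u x ≤ ε * u x) (ha : a ≤ 0)
    (hfr : ∀ x ∈ frontier K, a ≤ u x) {x : E} (hx : x ∈ K) : a ≤ u x := by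
  obtain ⟨x₀, hx₀, hmin⟩ := hK.exists_isMinOn ⟨x, hx⟩ hu
  refine le_trans ?_ (hmin hx)
  by_cases hint : x₀ ∈ interior K
  · have hlap := (hmin.isLocalMin (mem_interior_iff_mem_nhds.mp hint)).laplacian_nonneg
      (hu₂ x₀ hint)
    nlinarith [hΔ x₀ hint]
  · exact hfr x₀ ⟨subset_closure hx₀, hint⟩

variable {w : E → ℝ} {ε c : ℝ}

theorem neg_mul_expBarrier_le_sub_on_annulus (hn : 3 ≤ finrank ℝ E) (hε : 0 < ε)
    (hw : ContDiff ℝ 2 w) (hw₀ : ∀ x, 1 ≤ ‖x‖ → 0 ≤ w x)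
    (hΔ : ∀ x, 1 ≤ ‖x‖ → Δ w x ≤ ε * w x) (hc : 0 ≤ c)
    (h₁ : ∀ x, ‖x‖ = 1 → c * expBarrier (finrank ℝ E - 2) √ε 1 ≤ w x)
    {R : ℝ} {x : E} (hx₁ : 1 ≤ ‖x‖) (hxR : ‖x‖ ≤ R) :
    -(c * expBarrier (finrank ℝ E - 2) √ε R)
      ≤ w x - c * expBarrier (finrank ℝ E - 2) √ε ‖x‖ := by
  set φ := expBarrier (finrank ℝ E - 2) √ε
  set Φ : E → ℝ := fun y => φ ‖y‖
  set K : Set E := (fun y => ‖y‖) ⁻¹' Set.Icc 1 R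
  have hK : IsCompact K := (isCompact_closedBall (0 : E) R).of_isClosed_subset
    (isClosed_Icc.preimage continuous_norm) fun y hy => by simpa using hy.2
  have hΦ : ∀ y ∈ K, ContDiffAt ℝ 2 Φ y := fun y hy =>
    (contDiffAt_expBarrier (by linarith [hy.1])).comp y
      (contDiffAt_norm ℝ (norm_pos_iff.mp (by linarith [hy.1])))
  have hφR : 0 < φ R := expBarrier_pos (by linarith)
  refine hK.le_of_laplacian_le_mul_self (u := w - c • Φ)
    (fun y hy => (hw.continuous.continuousAt.sub
      (continuousAt_const.smul (hΦ y hy).continuousAt)).continuousWithinAt)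
    (fun y hy => hw.contDiffAt.sub ((hΦ y (interior_subset hy)).const_smul c))
    hε (fun y hy => ?_) (by nlinarith) (fun y hy => ?_) ⟨hx₁, hxR⟩
  · have hy₁ : 1 ≤ ‖y‖ := (interior_subset hy : y ∈ K).1
    have hΦy : ε * Φ y ≤ Δ Φ y :=
      mul_le_laplacian_expBarrier_norm hn hε.le (norm_pos_iff.mp (by linarith))
    have hΦ₂ := hΦ y (interior_subset hy)
    have hcΦ₂ : ContDiffAt ℝ 2 (c • Φ) y := hΦ₂.const_smul c
    rw [hw.contDiffAt.laplacian_sub hcΦ₂, laplacian_smul c hΦ₂]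
    simp only [Pi.sub_apply, Pi.smul_apply, smul_eq_mul]
    nlinarith [hΔ y hy₁]
  · have hy := continuous_norm.frontier_preimage_subset _ hy
    rw [frontier_Icc (by linarith)] at hy
    rcases hy with hy | hy
    · simp only [Pi.sub_apply, Pi.smul_apply, smul_eq_mul, Φ, hy]
      nlinarith [h₁ y hy]
    · simp only [Set.mem_singleton_iff] at hy
      simp only [Pi.sub_apply, Pi.smul_apply, smul_eq_mul, Φ, hy]
      linarith [hw₀ y (by linarith)]

theorem mul_expBarrier_le_of_laplacian_le (hn : 3 ≤ finrank ℝ E) (hε : 0 < ε)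
    (hw : ContDiff ℝ 2 w) (hw₀ : ∀ x, 1 ≤ ‖x‖ → 0 ≤ w x)
    (hΔ : ∀ x, 1 ≤ ‖x‖ → Δ w x ≤ ε * w x) (hc : 0 ≤ c)
    (h₁ : ∀ x, ‖x‖ = 1 → c * expBarrier (finrank ℝ E - 2) √ε 1 ≤ w x)
    {x : E} (hx : 1 ≤ ‖x‖) : c * expBarrier (finrank ℝ E - 2) √ε ‖x‖ ≤ w x := by
  have hm : (0 : ℝ) < finrank ℝ E - 2 := by
    have : (3 : ℝ) ≤ finrank ℝ E := by exact_mod_cast hn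
    linarith
  have hlim : Tendsto (fun R => -(c * expBarrier (finrank ℝ E - 2) √ε R)) atTop (𝓝 0) := by
    simpa using ((tendsto_expBarrier_atTop hm (sqrt_nonneg ε)).const_mul c).neg
  have := le_of_tendsto hlim ((eventually_ge_atTop ‖x‖).mono fun R hR =>
    neg_mul_expBarrier_le_sub_on_annulus hn hε hw hw₀ hΔ hc h₁ hx hR)
  linarith

end Comparison

theorem lower_barrier_general (N : ℕ) (hN : 3 ≤ N) (ε : ℝ) (hε : 0 < ε)
    (w : EuclideanSpace ℝ (Fin N) → ℝ) (hw : ContDiff ℝ 2 w)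
    (hpos : ∀ x, 0 < w x)
    (hsuper : ∀ x : EuclideanSpace ℝ (Fin N), 1 ≤ ‖x‖ →
      0 ≤ -(∑ i : Fin N, fderiv ℝ (fun y => fderiv ℝ w y (EuclideanSpace.single i 1)) x
        (EuclideanSpace.single i 1)) + ε * w x) :
    ∃ c : ℝ, 0 < c ∧ ∀ x : EuclideanSpace ℝ (Fin N), 1 ≤ ‖x‖ →
      c * ‖x‖ ^ (-((N : ℝ) - 2)) * Real.exp (-(Real.sqrt ε * ‖x‖)) ≤ w x := by
  have hdim : finrank ℝ (EuclideanSpace ℝ (Fin N)) = N := finrank_euclideanSpace_fin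
  have hΔ : ∀ x : EuclideanSpace ℝ (Fin N), 1 ≤ ‖x‖ → Δ w x ≤ ε * w x := fun x hx => by
    rw [laplacian_eq_sum_fderiv_fderiv (EuclideanSpace.basisFun (Fin N) ℝ) hw.contDiffAt]
    simpa [EuclideanSpace.basisFun_apply] using hsuper x hx
  obtain ⟨m, hm, hm_le⟩ := (isCompact_sphere (0 : EuclideanSpace ℝ (Fin N)) 1).exists_forall_le'
    hw.continuous.continuousOn fun x _ => hpos x
  have hφ₁ : 0 < expBarrier (N - 2) √ε 1 := expBarrier_pos one_pos
  refine ⟨m / expBarrier (N - 2) √ε 1, div_pos hm hφ₁, fun x hx => ?_⟩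
  have := mul_expBarrier_le_of_laplacian_le (by rwa [hdim]) hε hw (fun x _ => (hpos x).le) hΔ
    (div_pos hm hφ₁).le (fun y hy => by
      rw [hdim, div_mul_cancel₀ _ hφ₁.ne']; exact hm_le y (by simpa using hy)) hx
  rw [hdim] at this
  simpa only [expBarrier, mul_assoc] using this

theorem lower_barrier (N : ℕ) (hN : 3 ≤ N) (ε : ℝ) (hε : 0 < ε)
    (w : EuclideanSpace ℝ (Fin N) → ℝ) (hw : ContDiff ℝ 2 w)
    (hcont : Continuous w) (hpos : ∀ x, 0 < w x)
    (hsuper : ∀ x : EuclideanSpace ℝ (Fin N), 1 ≤ ‖x‖ →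
      0 ≤ -(∑ i : Fin N, fderiv ℝ (fun y => fderiv ℝ w y (EuclideanSpace.single i 1)) x
        (EuclideanSpace.single i 1)) + ε * w x) :
    ∃ c : ℝ, 0 < c ∧ ∀ x : EuclideanSpace ℝ (Fin N), 1 ≤ ‖x‖ →
      c * ‖x‖ ^ (-((N : ℝ) - 2)) * Real.exp (-(Real.sqrt ε * ‖x‖)) ≤ w x :=
  lower_barrier_general N hN ε hε w hw hpos hsuper
end
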